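/- arXiv:0707.3945 — 2 statements merged into one kernel-verified Lean document; each statement's English description precedes it below -/
import Mathlib

section
/- Let p, q, m ∈ ℕ, let A ∈ ℚ^{m×p}, G ∈ ℚ^{m×q}, b ∈ ℚ^m, and let P := {(x,y) ∈ ℝ^p × ℝ^q : Ax + Gy ≤ b componentwise} and P_I := conv({(x,y) ∈ P : x ∈ ℤ^p}). Let α ∈ ℚ^p, β ∈ ℚ^q, γ ∈ ℚ be such that α·x + β·y ≤ γ holds for every (x,y) ∈ P_I. Then there exist k ∈ ℕ with k ≥ 2, vectors d^1,…,d^k ∈ ℤ^p and integers δ^1,…,δ^k ∈ ℤ forming a k-disjunction (i.e., for every x ∈ ℤ^p there is some i with d^i·x ≤ δ^i) such that every (x,y) ∈ P with α·x + β·y > γ satisfies d^i·x > δ^i for all i ∈ {1,…,k}. That is, every valid cutting plane for P_I is a k-disjunctive cut for P for some k. -/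
open Set

noncomputable section

/-- The LP relaxation `P = {(x,y) : Ax + Gy ≤ b}`. -/
def feasSet {p q m : ℕ} (A : Matrix (Fin m) (Fin p) ℚ) (G : Matrix (Fin m) (Fin q) ℚ)
    (b : Fin m → ℚ) : Set ((Fin p → ℝ) × (Fin q → ℝ)) :=
  {z | ∀ i : Fin m, (∑ j, (A i j : ℝ) * z.1 j) + (∑ j, (G i j : ℝ) * z.2 j) ≤ (b i : ℝ)}

/-- `x` is an integral vector. -/
def IsIntVec {p : ℕ} (x : Fin p → ℝ) : Prop := ∀ j, ∃ n : ℤ, x j = (n : ℝ)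

/-- The mixed integer hull `P_I`. -/
def mixedIntHull {p q m : ℕ} (A : Matrix (Fin m) (Fin p) ℚ) (G : Matrix (Fin m) (Fin q) ℚ)
    (b : Fin m → ℚ) : Set ((Fin p → ℝ) × (Fin q → ℝ)) :=
  convexHull ℝ {z ∈ feasSet A G b | IsIntVec z.1}

/-- A `k`-disjunction: every integer point satisfies one of the inequalities `dⁱ·x ≤ δⁱ`. -/
def IsKDisjunction {p : ℕ} (k : ℕ) (d : Fin k → Fin p → ℤ) (δ : Fin k → ℤ) : Prop :=
  ∀ x : Fin p → ℤ, ∃ i, (∑ j, d i j * x j) ≤ δ i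

/-! Fourier–Motzkin elimination of `y` describes the set of `x` for which some `(x, y) ∈ P`
violates the cut as the solution set of finitely many rational inequalities in `x`, some of them
strict. Validity of the cut for `P_I` says that no integer point satisfies all of them. Scaling
each inequality to integer coefficients and rounding its right-hand side, its reversal is an
integral inequality `dⁱ·x ≤ δⁱ` that holds at every integer point violating the original one and
fails strictly on the whole solution set; these reversals form the disjunction. -/

def ltIf {α : Type*} [Preorder α] : Bool → α → α → Prop
  | true, x, y => x < y
  | false, x, y => x ≤ y

section ltIf

variable {α : Type*}

section Preorder

variable [Preorder α] {b : Bool} {x y : α}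

@[simp] lemma ltIf_true : ltIf true x y ↔ x < y := Iff.rfl

@[simp] lemma ltIf_false : ltIf false x y ↔ x ≤ y := Iff.rfl

lemma ltIf.le (h : ltIf b x y) : x ≤ y := by
  cases b
  exacts [h, le_of_lt h]

lemma LT.lt.ltIf (h : x < y) : ltIf b x y := by
  cases b
  exacts [h.le, h]

@[simp] lemma ltIf_self_iff : ltIf b x x ↔ b = false := by
  cases b <;> simp

end Preorder

theorem exists_ltIf_between [LinearOrder α] [DenselyOrdered α] [NoMinOrder α] [NoMaxOrder α]
    [Nonempty α] {ι : Type*} {lo up : Set ι} (hlo : lo.Finite) (hup : up.Finite)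
    (l u : ι → α) (b : ι → Bool) (h : ∀ i ∈ lo, ∀ j ∈ up, ltIf (b i || b j) (l i) (u j)) :
    ∃ t, (∀ i ∈ lo, ltIf (b i) (l i) t) ∧ ∀ j ∈ up, ltIf (b j) t (u j) := by
  rcases lo.eq_empty_or_nonempty with rfl | hlo'
  · obtain ⟨s, hs⟩ := (hup.image u).bddBelow
    obtain ⟨t, ht⟩ := exists_lt s
    exact ⟨t, by simp, fun j hj ↦ (ht.trans_le (hs ⟨j, hj, rfl⟩)).ltIf⟩
  rcases up.eq_empty_or_nonempty with rfl | hup'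
  · obtain ⟨s, hs⟩ := (hlo.image l).bddAbove
    obtain ⟨t, ht⟩ := exists_gt s
    exact ⟨t, fun i hi ↦ ((hs ⟨i, hi, rfl⟩).trans_lt ht).ltIf, by simp⟩
  obtain ⟨i₀, hi₀, hmax⟩ := lo.exists_max_image l hlo hlo'
  obtain ⟨j₀, hj₀, hmin⟩ := up.exists_min_image u hup hup'
  rcases (h i₀ hi₀ j₀ hj₀).le.lt_or_eq with hlt | heq
  · obtain ⟨t, hl, hu⟩ := exists_between hlt
    exact ⟨t, fun i hi ↦ ((hmax i hi).trans_lt hl).ltIf,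
      fun j hj ↦ (hu.trans_le (hmin j hj)).ltIf⟩
  -- the bounds meet at a point, which then satisfies every bound attaining it non-strictly
  refine ⟨l i₀, fun i hi ↦ ?_, fun j hj ↦ ?_⟩
  · rcases (hmax i hi).lt_or_eq with hlt | heq'
    · exact hlt.ltIf
    · have := h i hi j₀ hj₀
      rw [heq', heq, ltIf_self_iff, Bool.or_eq_false_iff] at this
      simp [this.1, heq']
  · rcases (hmin j hj).lt_or_eq with hlt | heq'
    · exact (heq ▸ hlt).ltIf
    · have := h i₀ hi₀ j hj
      rw [← heq', heq, ltIf_self_iff, Bool.or_eq_false_iff] at this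
      simp [this.2, heq, heq']

section OrderedAddGroup

variable [AddCommGroup α] [PartialOrder α] [IsOrderedAddMonoid α] {b b' : Bool} {x y : α}

lemma ltIf.add {x' y' : α} (h : ltIf b x y) (h' : ltIf b' x' y') :
    ltIf (b || b') (x + x') (y + y') := by
  cases b <;> cases b'
  exacts [add_le_add h h', add_lt_add_of_le_of_lt h h', add_lt_add_of_lt_of_le h h',
    add_lt_add h h']

lemma ltIf_add_left_iff (a : α) : ltIf b (a + x) (a + y) ↔ ltIf b x y := by
  cases b <;> simp

end OrderedAddGroup

section Field

variable {K : Type*} [Field K] [LinearOrder K] [IsStrictOrderedRing K] {b : Bool} {x y : K}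

lemma ltIf_mul_left_iff {c : K} (hc : 0 < c) : ltIf b (c * x) (c * y) ↔ ltIf b x y := by
  cases b <;> simp [mul_le_mul_iff_right₀ hc, mul_lt_mul_iff_right₀ hc]

lemma ltIf_add_mul_iff_of_pos {a c g t : K} (hg : 0 < g) :
    ltIf b (a + g * t) c ↔ ltIf b t ((c - a) / g) := by
  cases b
  · simp [le_div_iff₀ hg, ← le_sub_iff_add_le', mul_comm]
  · simp [lt_div_iff₀ hg, ← lt_sub_iff_add_lt', mul_comm]

lemma ltIf_add_mul_iff_of_neg {a c g t : K} (hg : g < 0) :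
    ltIf b (a + g * t) c ↔ ltIf b ((c - a) / g) t := by
  cases b
  · simp [div_le_iff_of_neg hg, ← le_sub_iff_add_le', mul_comm]
  · simp [div_lt_iff_of_neg hg, ← lt_sub_iff_add_lt', mul_comm]

end Field

end ltIf

/-- The inequality `a ⬝ x + g ⬝ y < c` if `strict`, and `a ⬝ x + g ⬝ y ≤ c` otherwise. -/
structure LinIneq (p q : ℕ) where
  a : Fin p → ℚ
  g : Fin q → ℚ
  c : ℚ
  strict : Bool

namespace LinIneq

variable {p q : ℕ}

def lincomb (μ : ℚ) (r : LinIneq p q) (ν : ℚ) (s : LinIneq p q) : LinIneq p q :=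
  ⟨μ • r.a + ν • s.a, μ • r.g + ν • s.g, μ * r.c + ν * s.c, r.strict || s.strict⟩

def init (r : LinIneq p (q + 1)) : LinIneq p q :=
  ⟨r.a, Fin.init r.g, r.c, r.strict⟩

def last (r : LinIneq p (q + 1)) : ℚ := r.g (Fin.last q)

/-- The combination of an upper bound `r` and a lower bound `s` on the last variable
in which that variable cancels. -/
def elimPair (r s : LinIneq p (q + 1)) : LinIneq p q :=
  (lincomb (-s.last) r r.last s).init

lemma last_lincomb_elimPair (r s : LinIneq p (q + 1)) :
    (lincomb (-s.last) r r.last s).last = 0 := by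
  simp only [last, lincomb, Pi.add_apply, Pi.smul_apply, smul_eq_mul]
  ring

/-- One step of Fourier–Motzkin elimination: eliminate the last `y`-variable. -/
def fmStep (S : Set (LinIneq p (q + 1))) : Set (LinIneq p q) :=
  init '' {r ∈ S | r.last = 0} ∪ Set.image2 elimPair {r ∈ S | 0 < r.last} {s ∈ S | s.last < 0}

lemma finite_fmStep {S : Set (LinIneq p (q + 1))} (hS : S.Finite) : (fmStep S).Finite :=
  ((hS.subset (Set.sep_subset _ _)).image _).union <|
    (hS.subset (Set.sep_subset _ _)).image2 _ (hS.subset (Set.sep_subset _ _))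

def fmElim : {q : ℕ} → Set (LinIneq p q) → Set (LinIneq p 0)
  | 0, S => S
  | _ + 1, S => fmElim (fmStep S)

lemma finite_fmElim {S : Set (LinIneq p q)} (hS : S.Finite) : (fmElim S).Finite := by
  induction q with
  | zero => exact hS
  | succ q ih => exact ih (finite_fmStep hS)

section Field

variable {K : Type*} [Field K]

def lhs (r : LinIneq p q) (x : Fin p → K) (y : Fin q → K) : K :=
  ∑ j, (r.a j : K) * x j + ∑ j, (r.g j : K) * y j

lemma lhs_snoc (r : LinIneq p (q + 1)) (x : Fin p → K) (y : Fin q → K) (t : K) :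
    r.lhs x (Fin.snoc y t) = r.init.lhs x y + r.last * t := by
  simp only [lhs, init, last, Fin.sum_univ_castSucc, Fin.snoc_castSucc, Fin.snoc_last, Fin.init]
  ring

def bound (r : LinIneq p (q + 1)) (x : Fin p → K) (y : Fin q → K) : K :=
  (r.c - r.init.lhs x y) / r.last

variable [LinearOrder K]

def Holds (r : LinIneq p q) (x : Fin p → K) (y : Fin q → K) : Prop :=
  ltIf r.strict (r.lhs x y) r.c

def IsSolution (S : Set (LinIneq p q)) (x : Fin p → K) (y : Fin q → K) : Prop :=
  ∀ r ∈ S, r.Holds x y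

lemma holds_init_iff {r : LinIneq p (q + 1)} (hr : r.last = 0) (x : Fin p → K) (y : Fin q → K)
    (t : K) : r.init.Holds x y ↔ r.Holds x (Fin.snoc y t) := by
  simp [Holds, lhs_snoc, hr, init]

variable [IsStrictOrderedRing K]

lemma lhs_lincomb (μ ν : ℚ) (r s : LinIneq p q) (x : Fin p → K) (y : Fin q → K) :
    (lincomb μ r ν s).lhs x y = μ * r.lhs x y + ν * s.lhs x y := by
  simp only [lhs, lincomb, Pi.add_apply, Pi.smul_apply, smul_eq_mul]
  push_cast
  simp only [add_mul, Finset.sum_add_distrib, mul_add, Finset.mul_sum, mul_assoc]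
  ring

lemma Holds.lincomb {μ ν : ℚ} (hμ : 0 < μ) (hν : 0 < ν) {r s : LinIneq p q}
    {x : Fin p → K} {y : Fin q → K} (hr : r.Holds x y) (hs : s.Holds x y) :
    (lincomb μ r ν s).Holds x y := by
  have hμ' : (0 : K) < μ := Rat.cast_pos.2 hμ
  have hν' : (0 : K) < ν := Rat.cast_pos.2 hν
  rw [Holds, lhs_lincomb]
  push_cast [LinIneq.lincomb]
  exact ((ltIf_mul_left_iff hμ').2 hr).add ((ltIf_mul_left_iff hν').2 hs)

lemma lhs_snoc_bound {r : LinIneq p (q + 1)} (hr : r.last ≠ 0) (x : Fin p → K) (y : Fin q → K) :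
    r.lhs x (Fin.snoc y (r.bound x y)) = r.c := by
  rw [lhs_snoc, bound, mul_div_cancel₀ _ (Rat.cast_ne_zero.2 hr)]
  ring

lemma ltIf_lhs_snoc_iff_of_pos {r : LinIneq p (q + 1)} (hr : 0 < r.last) {b : Bool}
    (x : Fin p → K) (y : Fin q → K) (t : K) :
    ltIf b (r.lhs x (Fin.snoc y t)) r.c ↔ ltIf b t (r.bound x y) := by
  rw [lhs_snoc, ltIf_add_mul_iff_of_pos (Rat.cast_pos.2 hr), bound]

lemma ltIf_lhs_snoc_iff_of_neg {r : LinIneq p (q + 1)} (hr : r.last < 0) {b : Bool}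
    (x : Fin p → K) (y : Fin q → K) (t : K) :
    ltIf b (r.lhs x (Fin.snoc y t)) r.c ↔ ltIf b (r.bound x y) t := by
  rw [lhs_snoc, ltIf_add_mul_iff_of_neg (Rat.cast_lt_zero.2 hr), bound]

lemma Holds.elimPair {r s : LinIneq p (q + 1)} (hr : 0 < r.last) (hs : s.last < 0)
    {x : Fin p → K} {y : Fin q → K} {t : K} (hrt : r.Holds x (Fin.snoc y t))
    (hst : s.Holds x (Fin.snoc y t)) : (elimPair r s).Holds x y :=
  (holds_init_iff (last_lincomb_elimPair r s) x y t).2 ((hrt.lincomb (neg_pos.2 hs) hr) hst)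

lemma ltIf_bound_of_holds_elimPair {r s : LinIneq p (q + 1)} (hr : 0 < r.last) (hs : s.last < 0)
    {x : Fin p → K} {y : Fin q → K} (h : (elimPair r s).Holds x y) :
    ltIf (s.strict || r.strict) (s.bound x y) (r.bound x y) := by
  -- evaluate at the point where `r` is tight
  rw [elimPair, holds_init_iff (last_lincomb_elimPair r s) x y (r.bound x y), Holds,
    lhs_lincomb, lhs_snoc_bound hr.ne'] at h
  push_cast [lincomb] at h
  rwa [ltIf_add_left_iff, ltIf_mul_left_iff (Rat.cast_pos.2 hr), ltIf_lhs_snoc_iff_of_neg hs,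
    Bool.or_comm] at h

lemma isSolution_fmStep {S : Set (LinIneq p (q + 1))} {x : Fin p → K} {y : Fin q → K} {t : K}
    (h : IsSolution S x (Fin.snoc y t)) : IsSolution (fmStep S) x y := by
  rintro _ (⟨r, ⟨hr, hr0⟩, rfl⟩ | ⟨r, ⟨hr, hrpos⟩, s, ⟨hs, hsneg⟩, rfl⟩)
  · exact (holds_init_iff hr0 x y t).2 (h r hr)
  · exact (h r hr).elimPair hrpos hsneg (h s hs)

lemma exists_isSolution_of_isSolution_fmStep {S : Set (LinIneq p (q + 1))} (hS : S.Finite)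
    {x : Fin p → K} {y : Fin q → K} (h : IsSolution (fmStep S) x y) :
    ∃ t, IsSolution S x (Fin.snoc y t) := by
  obtain ⟨t, hlo, hup⟩ := exists_ltIf_between (hS.subset (Set.sep_subset _ _))
    (hS.subset (Set.sep_subset _ _)) (bound · x y) (bound · x y) strict
    (fun s ⟨hs, hsneg⟩ r ⟨hr, hrpos⟩ ↦ ltIf_bound_of_holds_elimPair hrpos hsneg
      (h _ (Or.inr ⟨r, ⟨hr, hrpos⟩, s, ⟨hs, hsneg⟩, rfl⟩)))
  refine ⟨t, fun r hr ↦ ?_⟩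
  rcases lt_trichotomy r.last 0 with hneg | hzero | hpos
  · exact (ltIf_lhs_snoc_iff_of_neg hneg x y t).2 (hlo r ⟨hr, hneg⟩)
  · exact (holds_init_iff hzero x y t).1 (h _ (Or.inl ⟨r, ⟨hr, hzero⟩, rfl⟩))
  · exact (ltIf_lhs_snoc_iff_of_pos hpos x y t).2 (hup r ⟨hr, hpos⟩)

theorem isSolution_fmElim_iff {S : Set (LinIneq p q)} (hS : S.Finite) (x : Fin p → K) :
    IsSolution (fmElim S) x ![] ↔ ∃ y, IsSolution S x y := by
  induction q with
  | zero => exact ⟨fun h ↦ ⟨_, h⟩, fun ⟨y, h⟩ ↦ Subsingleton.elim y ![] ▸ h⟩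
  | succ q ih =>
    rw [fmElim, ih (finite_fmStep hS)]
    constructor
    · rintro ⟨y, hy⟩
      obtain ⟨t, ht⟩ := exists_isSolution_of_isSolution_fmStep hS hy
      exact ⟨_, ht⟩
    · rintro ⟨y, hy⟩
      exact ⟨Fin.init y, isSolution_fmStep (t := y (Fin.last q)) (by rwa [Fin.snoc_init_self])⟩

end Field

end LinIneq

section Integral

variable {K : Type*} [Field K] [LinearOrder K] [IsStrictOrderedRing K]

lemma exists_nat_mul_eq_intCast {ι : Type*} [Fintype ι] (a : ι → ℚ) :
    ∃ N : ℕ, 0 < N ∧ ∃ d : ι → ℤ, ∀ j, (N : ℚ) * a j = d j := by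
  refine ⟨∏ i, (a i).den, Finset.prod_pos fun i _ ↦ (a i).pos,
    fun j ↦ ((∏ i, (a i).den) / (a j).den : ℕ) * (a j).num, fun j ↦ ?_⟩
  obtain ⟨M, hM⟩ := Finset.dvd_prod_of_mem (fun i ↦ (a i).den) (Finset.mem_univ j)
  dsimp only
  rw [hM, Nat.mul_div_cancel_left _ (a j).pos]
  push_cast
  rw [← Rat.mul_den_eq_num]
  ring

lemma exists_int_ltIf_threshold (b : Bool) (c : ℚ) :
    ∃ n : ℤ, (∀ x : K, ltIf b x c → x < n) ∧ ∀ m : ℤ, ¬ ltIf b (m : K) c → n ≤ m := by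
  have hcast (m : ℤ) : (m : K) = ((m : ℚ) : K) := (Rat.cast_intCast m).symm
  cases b
  · refine ⟨⌊c⌋ + 1, fun x hx ↦ hx.trans_lt ?_, fun m hm ↦ ?_⟩
    · exact_mod_cast Int.lt_floor_add_one c
    · rw [ltIf_false, not_le, hcast, Rat.cast_lt] at hm
      exact Int.floor_lt.2 hm
  · refine ⟨⌈c⌉, fun x hx ↦ hx.trans_le ?_, fun m hm ↦ ?_⟩
    · exact_mod_cast Int.le_ceil c
    · rw [ltIf_true, not_lt, hcast, Rat.cast_le] at hm
      exact Int.ceil_le.2 hm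

lemma LinIneq.exists_int_reversal {p : ℕ} (r : LinIneq p 0) :
    ∃ (d : Fin p → ℤ) (δ : ℤ), (∀ x : Fin p → K, r.Holds x ![] → (δ : K) < ∑ j, (d j : K) * x j) ∧
      ∀ v : Fin p → ℤ, ¬ r.Holds (fun j ↦ (v j : K)) ![] → ∑ j, d j * v j ≤ δ := by
  obtain ⟨N, hN, d, hd⟩ := exists_nat_mul_eq_intCast r.a
  obtain ⟨n, hlt, hge⟩ := exists_int_ltIf_threshold (K := K) r.strict (N * r.c)
  have hscale (x : Fin p → K) :
      r.Holds x ![] ↔ ltIf r.strict (∑ j, (d j : K) * x j) ((N * r.c : ℚ) : K) := by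
    have hd' (j : Fin p) : (d j : K) = N * r.a j := by exact_mod_cast (hd j).symm
    rw [LinIneq.Holds, ← ltIf_mul_left_iff (c := (N : K)) (by exact_mod_cast hN)]
    simp [LinIneq.lhs, hd', Finset.mul_sum, mul_assoc]
  refine ⟨-d, -n, fun x hx ↦ ?_, fun v hv ↦ ?_⟩
  · have := hlt _ ((hscale x).1 hx)
    simp only [Pi.neg_apply, Int.cast_neg, neg_mul, Finset.sum_neg_distrib]
    linarith
  · have := hge (∑ j, d j * v j) (by exact_mod_cast (hscale _).not.1 hv)
    simp only [Pi.neg_apply, neg_mul, Finset.sum_neg_distrib]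
    omega

end Integral

lemma exists_isKDisjunction_of_finite {p : ℕ} {S : Set ((Fin p → ℤ) × ℤ)} (hS : S.Finite)
    (hcover : ∀ x : Fin p → ℤ, ∃ h ∈ S, ∑ j, h.1 j * x j ≤ h.2) :
    ∃ k, 2 ≤ k ∧ ∃ (d : Fin k → Fin p → ℤ) (δ : Fin k → ℤ),
      IsKDisjunction k d δ ∧ ∀ i, (d i, δ i) ∈ S := by
  obtain ⟨h₀, h₀S, -⟩ := hcover 0
  let l := h₀ :: h₀ :: hS.toFinset.toList
  have hl : ∀ h, h ∈ l ↔ h ∈ S := by simp [l, h₀S]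
  refine ⟨l.length, by simp [l], fun i ↦ (l.get i).1, fun i ↦ (l.get i).2, fun x ↦ ?_,
    fun i ↦ (hl _).1 (List.get_mem l i)⟩
  obtain ⟨h, hS', hx⟩ := hcover x
  obtain ⟨i, rfl⟩ := List.mem_iff_get.1 ((hl h).2 hS')
  exact ⟨i, hx⟩

def cutViolationSystem {p q m : ℕ} (A : Matrix (Fin m) (Fin p) ℚ) (G : Matrix (Fin m) (Fin q) ℚ)
    (b : Fin m → ℚ) (α : Fin p → ℚ) (β : Fin q → ℚ) (γ : ℚ) : Set (LinIneq p q) :=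
  insert ⟨-α, -β, -γ, true⟩ (Set.range fun i ↦ ⟨fun j ↦ A i j, fun j ↦ G i j, b i, false⟩)

lemma finite_cutViolationSystem {p q m : ℕ} (A : Matrix (Fin m) (Fin p) ℚ)
    (G : Matrix (Fin m) (Fin q) ℚ) (b : Fin m → ℚ) (α : Fin p → ℚ) (β : Fin q → ℚ) (γ : ℚ) :
    (cutViolationSystem A G b α β γ).Finite :=
  (Set.finite_range _).insert _

lemma isSolution_cutViolationSystem_iff {p q m : ℕ} (A : Matrix (Fin m) (Fin p) ℚ)
    (G : Matrix (Fin m) (Fin q) ℚ) (b : Fin m → ℚ) (α : Fin p → ℚ) (β : Fin q → ℚ) (γ : ℚ)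
    (z : (Fin p → ℝ) × (Fin q → ℝ)) :
    LinIneq.IsSolution (cutViolationSystem A G b α β γ) z.1 z.2 ↔
      z ∈ feasSet A G b ∧ (γ : ℝ) < ∑ j, (α j : ℝ) * z.1 j + ∑ j, (β j : ℝ) * z.2 j := by
  simp only [LinIneq.IsSolution, cutViolationSystem, Set.forall_mem_insert, Set.forall_mem_range,
    LinIneq.Holds, LinIneq.lhs, ltIf_true, ltIf_false, feasSet, Set.mem_ofPred_eq]
  rw [and_comm]
  refine and_congr_right' ?_
  simp only [Pi.neg_apply, Rat.cast_neg, neg_mul, Finset.sum_neg_distrib, ← neg_add,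
    neg_lt_neg_iff]

lemma isSolution_fmElim_cutViolationSystem_iff {p q m : ℕ} (A : Matrix (Fin m) (Fin p) ℚ)
    (G : Matrix (Fin m) (Fin q) ℚ) (b : Fin m → ℚ) (α : Fin p → ℚ) (β : Fin q → ℚ) (γ : ℚ)
    (x : Fin p → ℝ) :
    LinIneq.IsSolution (LinIneq.fmElim (cutViolationSystem A G b α β γ)) x ![] ↔
      ∃ y, (x, y) ∈ feasSet A G b ∧ (γ : ℝ) < ∑ j, (α j : ℝ) * x j + ∑ j, (β j : ℝ) * y j :=
  (LinIneq.isSolution_fmElim_iff (finite_cutViolationSystem A G b α β γ) x).trans <|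
    exists_congr fun y ↦ isSolution_cutViolationSystem_iff A G b α β γ (x, y)

/-- Every valid cutting plane for `P_I` is a `k`-disjunctive cut for `P` for some `k`. -/
theorem every_valid_inequality_is_kdisjunctive_cut_for_some_k
    {p q m : ℕ} (A : Matrix (Fin m) (Fin p) ℚ) (G : Matrix (Fin m) (Fin q) ℚ) (b : Fin m → ℚ)
    (α : Fin p → ℚ) (β : Fin q → ℚ) (γ : ℚ)
    (hvalid : ∀ z ∈ mixedIntHull A G b,
      (∑ j, (α j : ℝ) * z.1 j) + (∑ j, (β j : ℝ) * z.2 j) ≤ (γ : ℝ)) :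
    ∃ k : ℕ, 2 ≤ k ∧ ∃ (d : Fin k → Fin p → ℤ) (δ : Fin k → ℤ),
      IsKDisjunction k d δ ∧
      ∀ z ∈ feasSet A G b,
        (γ : ℝ) < (∑ j, (α j : ℝ) * z.1 j) + (∑ j, (β j : ℝ) * z.2 j) →
        ∀ i, (δ i : ℝ) < ∑ j, (d i j : ℝ) * z.1 j := by
  set F := LinIneq.fmElim (cutViolationSystem A G b α β γ)
  choose d δ hstrict hrev using fun r : LinIneq p 0 ↦ r.exists_int_reversal (K := ℝ)
  have hcover (v : Fin p → ℤ) : ∃ h ∈ (fun r ↦ (d r, δ r)) '' F, ∑ j, h.1 j * v j ≤ h.2 := by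
    -- an integer solution would give a point of `P_I` violating the cut
    have hv : ¬ LinIneq.IsSolution F (fun j ↦ (v j : ℝ)) ![] := by
      intro hv
      obtain ⟨y, hz, hcut⟩ := (isSolution_fmElim_cutViolationSystem_iff A G b α β γ _).1 hv
      exact hcut.not_ge (hvalid _ (subset_convexHull ℝ _ ⟨hz, fun j ↦ ⟨v j, rfl⟩⟩))
    obtain ⟨r, hr, hrv⟩ := not_forall₂.1 hv
    exact ⟨_, ⟨r, hr, rfl⟩, hrev r v hrv⟩
  have hcut_strict : ∀ h ∈ (fun r ↦ (d r, δ r)) '' F, ∀ z ∈ feasSet A G b,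
      (γ : ℝ) < ∑ j, (α j : ℝ) * z.1 j + ∑ j, (β j : ℝ) * z.2 j →
      (h.2 : ℝ) < ∑ j, (h.1 j : ℝ) * z.1 j :=
    Set.forall_mem_image.2 fun r hr z hz hcut ↦ hstrict r z.1
      ((isSolution_fmElim_cutViolationSystem_iff A G b α β γ z.1).2 ⟨z.2, hz, hcut⟩ r hr)
  obtain ⟨k, hk, d', δ', hdisj, hmem⟩ := exists_isKDisjunction_of_finite
    ((LinIneq.finite_fmElim (finite_cutViolationSystem A G b α β γ)).image _) hcover
  exact ⟨k, hk, d', δ', hdisj, fun z hz hcut i ↦ hcut_strict _ (hmem i) z hz hcut⟩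

end
end

section
/- Let P := {(x₁,x₂,y) ∈ ℝ² × ℝ : −x₁ + y ≤ 0, −x₂ + y ≤ 0, x₁ + x₂ + y ≤ 2} with integer variables x = (x₁,x₂) (p = 2, q = 1), and let P_I := conv({(x,y) ∈ P : x ∈ ℤ²}). Then sup{y : (x,y) ∈ P_I} = 0, while for every i ∈ ℕ, sup{y : (x,y) ∈ P^{(i)}} > 0, where P^{(i)} denotes the i-th iterated split closure of P. In particular, no finite sequence of split cuts proves the optimal value 0 of this mixed integer program. -/
open Set

noncomputable section

/-- The split closure of a set `C`: the intersection of `C` with all half-spaces valid for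
both sides of some split disjunction `d·x ≤ δ ∨ d·x ≥ δ + 1`. -/
def splitClosure {p q : ℕ} (C : Set ((Fin p → ℝ) × (Fin q → ℝ))) :
    Set ((Fin p → ℝ) × (Fin q → ℝ)) :=
  {z ∈ C | ∀ (α : Fin p → ℝ) (β : Fin q → ℝ) (γ : ℝ),
    (∃ (d : Fin p → ℤ) (δ : ℤ),
      ∀ w ∈ C, ((∑ j, (d j : ℝ) * w.1 j) ≤ (δ : ℝ) ∨ (δ : ℝ) + 1 ≤ (∑ j, (d j : ℝ) * w.1 j)) →
        (∑ j, α j * w.1 j) + (∑ j, β j * w.2 j) ≤ γ) →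
    (∑ j, α j * z.1 j) + (∑ j, β j * z.2 j) ≤ γ}

/-- Iterated split closures, `C^{(0)} = C`. -/
def splitIter {p q : ℕ} (C : Set ((Fin p → ℝ) × (Fin q → ℝ))) :
    ℕ → Set ((Fin p → ℝ) × (Fin q → ℝ))
  | 0 => C
  | (i+1) => splitClosure (splitIter C i)

/-- The Cook–Kannan–Schrijver polyhedron with two integer and one continuous variable. -/
def cksP : Set ((Fin 2 → ℝ) × (Fin 1 → ℝ)) :=
  {z | -z.1 0 + z.2 0 ≤ 0 ∧ -z.1 1 + z.2 0 ≤ 0 ∧ z.1 0 + z.1 1 + z.2 0 ≤ 2}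

/-- Its mixed integer hull. -/
def cksPI : Set ((Fin 2 → ℝ) × (Fin 1 → ℝ)) :=
  convexHull ℝ {z ∈ cksP | IsIntVec z.1}

/-! An integer point of `P` with `y > 0` would have `x₁, x₂ ≥ 1`, hence `y ≤ 2 - x₁ - x₂ ≤ 0`;
so `P_I` lies in `y ≤ 0`, and the origin attains `0`.

For the closures let `T(t) = conv {0, 2e₁, 2e₂, (2/3, 2/3, t)}`, so `T(2/3) ⊆ P`. If a convex `C`
contains `T(t)`, then `T(t/3) ⊆ SC(C)`: the base vertices are integral, so no split cuts them off.
A split `(d, δ)` with the apex strictly inside has `2(d₁ + d₂) - 3δ ∈ {1, 2}`, and `d ≠ 0` gives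
`σ = ±1` and `k` with `σdₖ ≥ 1`. For either sign `s = ±1` the apex `(2/3, 2/3, t/3)` equals
`2/3 · ((2/3, 2/3) - sσeₖ/3, t/2) + 1/3 · ((2/3, 2/3) + 2sσeₖ/3, 0)`, both points of `T(t)`, and
`s = 1` in the first case, `s = -1` in the second, puts them on opposite sides of the split.
By induction `T(2/3 · 3⁻ⁱ) ⊆ P⁽ⁱ⁾`, whose apex has height `> 0`. -/

section SplitClosure

variable {p q : ℕ}

lemma convex_halfSpace_cut (α : Fin p → ℝ) (β : Fin q → ℝ) (γ : ℝ) :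
    Convex ℝ {w : (Fin p → ℝ) × (Fin q → ℝ) | (∑ j, α j * w.1 j) + (∑ j, β j * w.2 j) ≤ γ} := by
  refine convex_halfSpace_le ⟨fun w w' => ?_, fun c w => ?_⟩ γ
  · simp only [Prod.fst_add, Prod.snd_add, Pi.add_apply, mul_add, Finset.sum_add_distrib]
    ring
  · simp only [Prod.smul_fst, Prod.smul_snd, Pi.smul_apply, smul_eq_mul, mul_add, Finset.mul_sum,
      mul_left_comm c]

lemma convex_splitClosure {C : Set ((Fin p → ℝ) × (Fin q → ℝ))} (hC : Convex ℝ C) :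
    Convex ℝ (splitClosure C) :=
  fun _ hz _ hz' _ _ ha hb hab => ⟨hC hz.1 hz'.1 ha hb hab, fun α β γ hcut =>
    convex_halfSpace_cut α β γ (hz.2 α β γ hcut) (hz'.2 α β γ hcut) ha hb hab⟩

lemma convex_splitIter {C : Set ((Fin p → ℝ) × (Fin q → ℝ))} (hC : Convex ℝ C) :
    ∀ i, Convex ℝ (splitIter C i)
  | 0 => hC
  | i + 1 => convex_splitClosure (convex_splitIter hC i)

lemma splitIter_subset (C : Set ((Fin p → ℝ) × (Fin q → ℝ))) : ∀ i, splitIter C i ⊆ C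
  | 0 => subset_rfl
  | i + 1 => fun _ hz => splitIter_subset C i hz.1

def splitUnion (C : Set ((Fin p → ℝ) × (Fin q → ℝ))) (d : Fin p → ℤ) (δ : ℤ) :
    Set ((Fin p → ℝ) × (Fin q → ℝ)) :=
  {w ∈ C | (∑ j, (d j : ℝ) * w.1 j) ≤ δ ∨ (δ : ℝ) + 1 ≤ ∑ j, (d j : ℝ) * w.1 j}

lemma mem_splitClosure_of_forall_mem_convexHull {C : Set ((Fin p → ℝ) × (Fin q → ℝ))}
    {z : (Fin p → ℝ) × (Fin q → ℝ)} (hz : z ∈ C)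
    (h : ∀ d δ, z ∈ convexHull ℝ (splitUnion C d δ)) : z ∈ splitClosure C :=
  ⟨hz, fun α β γ ⟨d, δ, hcut⟩ =>
    convexHull_min (fun w hw => hcut w hw.1 hw.2) (convex_halfSpace_cut α β γ) (h d δ)⟩

lemma mem_splitClosure_of_isIntVec {C : Set ((Fin p → ℝ) × (Fin q → ℝ))}
    {z : (Fin p → ℝ) × (Fin q → ℝ)} (hz : z ∈ C) (hint : IsIntVec z.1) : z ∈ splitClosure C := by
  refine mem_splitClosure_of_forall_mem_convexHull hz fun d δ => subset_convexHull ℝ _ ⟨hz, ?_⟩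
  choose n hn using hint
  have hsum : ∑ j, (d j : ℝ) * z.1 j = ((∑ j, d j * n j : ℤ) : ℝ) := by simp [hn]
  rw [hsum]
  exact_mod_cast (le_or_gt _ δ).imp_right Int.add_one_le_of_lt

end SplitClosure

lemma convex_cksP : Convex ℝ cksP := by
  intro z hz z' hz' a b ha hb hab
  obtain ⟨h₁, h₂, h₃⟩ := hz
  obtain ⟨h₁', h₂', h₃'⟩ := hz'
  refine ⟨?_, ?_, ?_⟩ <;>
    simp only [Prod.fst_add, Prod.snd_add, Prod.smul_fst, Prod.smul_snd, Pi.add_apply,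
      Pi.smul_apply, smul_eq_mul] <;> nlinarith

lemma snd_le_of_mem_cksP {z : (Fin 2 → ℝ) × (Fin 1 → ℝ)} (hz : z ∈ cksP) : z.2 0 ≤ 2 / 3 := by
  obtain ⟨h₁, h₂, h₃⟩ := hz
  linarith

lemma snd_nonpos_of_mem_cksP_of_isIntVec {z : (Fin 2 → ℝ) × (Fin 1 → ℝ)} (hz : z ∈ cksP)
    (hint : IsIntVec z.1) : z.2 0 ≤ 0 := by
  obtain ⟨n₀, hn₀⟩ := hint 0
  obtain ⟨n₁, hn₁⟩ := hint 1
  obtain ⟨h₁, h₂, h₃⟩ := hz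
  rw [hn₀] at h₁ h₃
  rw [hn₁] at h₂ h₃
  by_contra! hpos
  have h₀ : (1 : ℝ) ≤ n₀ := Int.cast_one_le_of_pos (by exact_mod_cast (by linarith : (0 : ℝ) < n₀))
  have h₁ : (1 : ℝ) ≤ n₁ := Int.cast_one_le_of_pos (by exact_mod_cast (by linarith : (0 : ℝ) < n₁))
  linarith

lemma snd_nonpos_of_mem_cksPI {z : (Fin 2 → ℝ) × (Fin 1 → ℝ)} (hz : z ∈ cksPI) : z.2 0 ≤ 0 :=
  convexHull_min (fun _ hw => snd_nonpos_of_mem_cksP_of_isIntVec hw.1 hw.2)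
    (convex_halfSpace_le (f := fun w : (Fin 2 → ℝ) × (Fin 1 → ℝ) => w.2 0)
      ⟨fun _ _ => rfl, fun _ _ => rfl⟩ 0) hz

def cksApex (t : ℝ) : (Fin 2 → ℝ) × (Fin 1 → ℝ) := (fun _ => 2 / 3, fun _ => t)

def tent (t : ℝ) : Set ((Fin 2 → ℝ) × (Fin 1 → ℝ)) :=
  convexHull ℝ {0, (![2, 0], 0), (![0, 2], 0), cksApex t}

lemma mem_tent_of_le {x : Fin 2 → ℝ} {y c t : ℝ} (hy : y = c * t) (hc : 0 ≤ c)
    (h₀ : 2 * c ≤ 3 * x 0) (h₁ : 2 * c ≤ 3 * x 1) (h₂ : 2 * c ≤ 3 * (2 - x 0 - x 1)) :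
    ((x, fun _ => y) : (Fin 2 → ℝ) × (Fin 1 → ℝ)) ∈ tent t := by
  have hcombo : ((x, fun _ => y) : (Fin 2 → ℝ) × (Fin 1 → ℝ)) =
      (1 - x 0 / 2 - x 1 / 2 - c / 3) • 0 + ((x 0 - 2 / 3 * c) / 2) • (![2, 0], 0) +
        ((x 1 - 2 / 3 * c) / 2) • (![0, 2], 0) + c • cksApex t := by
    refine Prod.ext (funext fun j => ?_) (funext fun j => ?_)
    · fin_cases j <;> simp [cksApex, Matrix.vecHead, Matrix.vecTail] <;> ring
    · simp [cksApex, hy]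
  have hmem := (convex_convexHull ℝ {0, (![2, 0], 0), (![0, 2], 0), cksApex t}).sum_mem
    (t := Finset.univ)
    (w := ![1 - x 0 / 2 - x 1 / 2 - c / 3, (x 0 - 2 / 3 * c) / 2, (x 1 - 2 / 3 * c) / 2, c])
    (z := ![0, (![2, 0], 0), (![0, 2], 0), cksApex t])
    (fun i _ => by fin_cases i <;> simp <;> linarith)
    (by simp [Fin.sum_univ_four]; ring)
    (fun i _ => by fin_cases i <;> exact subset_convexHull ℝ _ (by simp))
  rw [hcombo]
  simpa [Fin.sum_univ_four, tent] using hmem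

lemma cksApex_div_three_mem_tent (t : ℝ) : cksApex (t / 3) ∈ tent t :=
  mem_tent_of_le (c := 1 / 3) (by ring) (by norm_num) (by norm_num) (by norm_num) (by norm_num)

lemma shifted_cksApex_mem_tent (t : ℝ) (k : Fin 2) {σ : ℝ} (hσ : σ = 1 ∨ σ = -1) :
    (((fun _ => 2 / 3) + (-1 / 3 : ℝ) • Pi.single k σ, fun _ => t / 2) ∈ tent t) ∧
      (((fun _ => 2 / 3) + (2 / 3 : ℝ) • Pi.single k σ, fun _ => 0) ∈ tent t) := by
  constructor
  · refine mem_tent_of_le (c := 1 / 2) (by ring) (by norm_num) ?_ ?_ ?_ <;>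
      rcases hσ with rfl | rfl <;> fin_cases k <;> simp <;> norm_num
  · refine mem_tent_of_le (c := 0) (zero_mul t).symm le_rfl ?_ ?_ ?_ <;>
      rcases hσ with rfl | rfl <;> fin_cases k <;> simp <;> norm_num

lemma cksApex_div_three_eq_combo (t : ℝ) (k : Fin 2) (σ : ℝ) :
    cksApex (t / 3) =
      (2 / 3 : ℝ) • (((fun _ => 2 / 3) + (-1 / 3 : ℝ) • Pi.single k σ, fun _ => t / 2) :
        (Fin 2 → ℝ) × (Fin 1 → ℝ)) +
      (1 / 3 : ℝ) • ((fun _ => 2 / 3) + (2 / 3 : ℝ) • Pi.single k σ, fun _ => 0) := by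
  refine Prod.ext (funext fun j => ?_) (funext fun j => ?_)
  · simp [cksApex]
    ring
  · simp [cksApex]

lemma exists_sign_one_le_mul {n : ℤ} (hn : n ≠ 0) : ∃ σ : ℝ, (σ = 1 ∨ σ = -1) ∧ 1 ≤ σ * n := by
  rcases hn.lt_or_gt with hneg | hpos
  · refine ⟨-1, Or.inr rfl, ?_⟩
    have : (n : ℝ) ≤ -1 := by exact_mod_cast Int.le_sub_one_of_lt hneg
    linarith
  · exact ⟨1, Or.inl rfl, by simpa using (by exact_mod_cast hpos : (1 : ℝ) ≤ n)⟩

lemma sum_mul_shifted_cksApex (d : Fin 2 → ℤ) (a : ℝ) (k : Fin 2) (σ : ℝ) :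
    ∑ j, (d j : ℝ) * ((fun _ => 2 / 3) + a • Pi.single k σ : Fin 2 → ℝ) j =
      2 / 3 * ((d 0 : ℝ) + d 1) + a * (σ * d k) := by
  fin_cases k <;> simp [Fin.sum_univ_two] <;> ring

lemma cksApex_div_three_mem_convexHull_splitUnion {C : Set ((Fin 2 → ℝ) × (Fin 1 → ℝ))} {t : ℝ}
    (htC : tent t ⊆ C) {d : Fin 2 → ℤ} {δ : ℤ} (k : Fin 2) {σ : ℝ} (hσ : σ = 1 ∨ σ = -1)
    (hnear : 2 / 3 * ((d 0 : ℝ) + d 1) + -1 / 3 * (σ * d k) ≤ δ ∨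
      (δ : ℝ) + 1 ≤ 2 / 3 * ((d 0 : ℝ) + d 1) + -1 / 3 * (σ * d k))
    (hfar : 2 / 3 * ((d 0 : ℝ) + d 1) + 2 / 3 * (σ * d k) ≤ δ ∨
      (δ : ℝ) + 1 ≤ 2 / 3 * ((d 0 : ℝ) + d 1) + 2 / 3 * (σ * d k)) :
    cksApex (t / 3) ∈ convexHull ℝ (splitUnion C d δ) := by
  rw [cksApex_div_three_eq_combo t k σ]
  refine convex_convexHull ℝ (splitUnion C d δ)
    (subset_convexHull ℝ _ ⟨htC (shifted_cksApex_mem_tent t k hσ).1, ?_⟩)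
    (subset_convexHull ℝ _ ⟨htC (shifted_cksApex_mem_tent t k hσ).2, ?_⟩)
    (by norm_num) (by norm_num) (by norm_num)
  · rwa [sum_mul_shifted_cksApex]
  · rwa [sum_mul_shifted_cksApex]

lemma cksApex_div_three_mem_splitClosure {C : Set ((Fin 2 → ℝ) × (Fin 1 → ℝ))} {t : ℝ}
    (htC : tent t ⊆ C) : cksApex (t / 3) ∈ splitClosure C := by
  refine mem_splitClosure_of_forall_mem_convexHull (htC (cksApex_div_three_mem_tent t))
    fun d δ => ?_
  have hval : ∑ j, (d j : ℝ) * (cksApex (t / 3)).1 j = 2 / 3 * ((d 0 : ℝ) + d 1) := by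
    simp [cksApex, Fin.sum_univ_two]
    ring
  by_cases hside : ∑ j, (d j : ℝ) * (cksApex (t / 3)).1 j ≤ δ ∨
      (δ : ℝ) + 1 ≤ ∑ j, (d j : ℝ) * (cksApex (t / 3)).1 j
  · exact subset_convexHull ℝ _ ⟨htC (cksApex_div_three_mem_tent t), hside⟩
  rw [hval, not_or, not_le, not_le] at hside
  have hlo : 3 * δ < 2 * (d 0 + d 1) := by
    exact_mod_cast (by linarith : (3 * δ : ℝ) < 2 * ((d 0 : ℝ) + d 1))
  have hhi : 2 * (d 0 + d 1) < 3 * δ + 3 := by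
    exact_mod_cast (by linarith : 2 * ((d 0 : ℝ) + d 1) < 3 * δ + 3)
  obtain ⟨k, hk⟩ : ∃ k, d k ≠ 0 := by
    by_contra! h
    have := h 0
    have := h 1
    omega
  obtain ⟨σ, hσ, hσk⟩ := exists_sign_one_le_mul hk
  rcases (by omega : 2 * (d 0 + d 1) = 3 * δ + 1 ∨ 2 * (d 0 + d 1) = 3 * δ + 2) with h | h
  · have : 2 * ((d 0 : ℝ) + d 1) = 3 * δ + 1 := by exact_mod_cast h
    exact cksApex_div_three_mem_convexHull_splitUnion htC k hσ (Or.inl (by linarith))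
      (Or.inr (by linarith))
  · have : 2 * ((d 0 : ℝ) + d 1) = 3 * δ + 2 := by exact_mod_cast h
    refine cksApex_div_three_mem_convexHull_splitUnion htC k (σ := -σ)
      (by rcases hσ with rfl | rfl <;> norm_num) (Or.inr ?_) (Or.inl ?_) <;> linarith

lemma isIntVec_vec2 (a b : ℤ) : IsIntVec ![(a : ℝ), b] := by
  intro j
  fin_cases j
  exacts [⟨a, rfl⟩, ⟨b, rfl⟩]

lemma tent_div_three_subset_splitClosure {C : Set ((Fin 2 → ℝ) × (Fin 1 → ℝ))} {t : ℝ}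
    (hC : Convex ℝ C) (htC : tent t ⊆ C) : tent (t / 3) ⊆ splitClosure C := by
  refine convexHull_min ?_ (convex_splitClosure hC)
  have hbase : ∀ z ∈ ({0, (![2, 0], 0), (![0, 2], 0)} : Set ((Fin 2 → ℝ) × (Fin 1 → ℝ))),
      z ∈ tent t := fun z hz => subset_convexHull ℝ _ (by aesop)
  rintro z (rfl | rfl | rfl | rfl)
  · exact mem_splitClosure_of_isIntVec (htC (hbase _ (by simp))) fun _ => ⟨0, by simp⟩
  · exact mem_splitClosure_of_isIntVec (htC (hbase _ (by simp))) (by simpa using isIntVec_vec2 2 0)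
  · exact mem_splitClosure_of_isIntVec (htC (hbase _ (by simp))) (by simpa using isIntVec_vec2 0 2)
  · exact cksApex_div_three_mem_splitClosure htC

lemma tent_subset_cksP : tent (2 / 3) ⊆ cksP := by
  refine convexHull_min ?_ convex_cksP
  rintro z (rfl | rfl | rfl | rfl) <;> norm_num [cksP, cksApex]

lemma tent_subset_splitIter (i : ℕ) : tent (2 / 3 / 3 ^ i) ⊆ splitIter cksP i := by
  induction i with
  | zero => simpa [splitIter] using tent_subset_cksP
  | succ i ih =>
    rw [pow_succ, ← div_div]
    exact tent_div_three_subset_splitClosure (convex_splitIter convex_cksP i) ih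

/-- On the Cook–Kannan–Schrijver example the mixed integer optimum of `max y` is `0`, but every
iterated split closure still has value strictly greater than `0`: split cuts never prove the
optimal value. -/
theorem cks_split_closures_never_reach_optimum :
    sSup ((fun z : (Fin 2 → ℝ) × (Fin 1 → ℝ) => z.2 0) '' cksPI) = 0 ∧
    ∀ i : ℕ, 0 < sSup ((fun z : (Fin 2 → ℝ) × (Fin 1 → ℝ) => z.2 0) '' splitIter cksP i) := by
  refine ⟨IsGreatest.csSup_eq ⟨⟨0, ?_, rfl⟩, ?_⟩,
    fun i => lt_csSup_of_lt (a := 2 / 3 / 3 ^ i) ⟨2 / 3, ?_⟩ ?_ (by positivity)⟩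
  · exact subset_convexHull ℝ _ ⟨by norm_num [cksP], fun _ => ⟨0, by simp⟩⟩
  · rintro _ ⟨z, hz, rfl⟩
    exact snd_nonpos_of_mem_cksPI hz
  · rintro _ ⟨z, hz, rfl⟩
    exact snd_le_of_mem_cksP (splitIter_subset cksP i hz)
  · exact ⟨cksApex (2 / 3 / 3 ^ i), tent_subset_splitIter i (subset_convexHull ℝ _ (by simp)), rfl⟩

end
end
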